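/- Let X take values in an interval I and suppose the treatment probability function p : I → [0,1] has exactly one discontinuity at c, the conditional expectations E[Y^(i) | X = x, C_T] are continuous in x for each potential outcome i ∈ {0,1} and compliance type in {Always-taker, Never-taker, Complier}, the conditional probabilities P(C_T = c_T | X = x) are continuous in x, there are no defiers (treatment probability is monotone in x for each unit), and the compliance jump p(c) - lim_{x↑c} p(x) is nonzero. Then the local average treatment effect for compliers at c satisfies E[Y^(1) - Y^(0) | X = c, Complier] = (lim_{x↓c} E[Y|X=x] - lim_{x↑c} E[Y|X=x]) / (lim_{x↓c} P(T=1|X=x) - lim_{x↑c} P(T=1|X=x)). -/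

import Mathlib

open Filter Set Topology

/-! On each side of `c` the observed mean and treatment probability coincide with continuous
functions: to the right compliers are treated, to the left they are not. Hence the one-sided
limits of `μ` differ by `(m1C c - m0C c) * πC c` and those of `pT` by `πC c`, the share of
compliers at the cutoff; dividing the two jumps leaves the complier effect. -/

section Piecewise

variable {α β : Type*} [TopologicalSpace α] [LinearOrder α] [TopologicalSpace β]
  {f g : α → β} {c : α}

theorem tendsto_ite_le_nhdsGT (hf : ContinuousAt f c) :
    Tendsto (fun x => if c ≤ x then f x else g x) (𝓝[>] c) (𝓝 (f c)) :=
  (tendsto_nhdsWithin_of_tendsto_nhds hf).congr' <|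
    eventually_nhdsWithin_of_forall fun _ hx => (if_pos (le_of_lt hx)).symm

theorem tendsto_ite_le_nhdsLT (hg : ContinuousAt g c) :
    Tendsto (fun x => if c ≤ x then f x else g x) (𝓝[<] c) (𝓝 (g c)) :=
  (tendsto_nhdsWithin_of_tendsto_nhds hg).congr' <|
    eventually_nhdsWithin_of_forall fun _ hx => (if_neg (not_le.mpr hx)).symm

end Piecewise

/-- **Fuzzy RDD identification with a single cutoff.**
`πA, πN, πC` are the conditional probabilities of the compliance types
(always-taker, never-taker, complier) given `X = x`; `m1A, m0N` are the
conditional means of the relevant potential outcomes for always/never-takers,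
and `m1C, m0C` those for compliers. The observed conditional mean outcome `μ`
and treatment probability `pT` decompose accordingly: compliers are treated
iff `x ≥ c` (no defiers), always-takers always, never-takers never.
All conditional means and type probabilities are continuous in `x`, and the
compliance jump `πC c` is nonzero. Then the local average treatment effect for
compliers at `c`, namely `m1C c - m0C c`, equals the ratio of the jumps of `μ`
and `pT` at `c`. -/
theorem fuzzy_rdd_identification
    (c : ℝ) (πA πN πC m1A m0N m1C m0C μ pT : ℝ → ℝ)
    (hπA : Continuous πA) (hπN : Continuous πN) (hπC : Continuous πC)
    (hm1A : Continuous m1A) (hm0N : Continuous m0N)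
    (hm1C : Continuous m1C) (hm0C : Continuous m0C)
    (hμ : ∀ x, μ x = m1A x * πA x + m0N x * πN x +
      (if c ≤ x then m1C x else m0C x) * πC x)
    (hpT : ∀ x, pT x = πA x + (if c ≤ x then πC x else 0))
    (hjump : πC c ≠ 0) :
    ∀ μR μL pR pL : ℝ,
      Tendsto μ (nhdsWithin c (Ioi c)) (nhds μR) →
      Tendsto μ (nhdsWithin c (Iio c)) (nhds μL) →
      Tendsto pT (nhdsWithin c (Ioi c)) (nhds pR) →
      Tendsto pT (nhdsWithin c (Iio c)) (nhds pL) →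
      m1C c - m0C c = (μR - μL) / (pR - pL) := by
  intro μR μL pR pL hμR hμL hpR hpL
  rw [funext hμ] at hμR hμL
  rw [funext hpT] at hpR hpL
  have hbase : Continuous fun x => m1A x * πA x + m0N x * πN x :=
    (hm1A.mul hπA).add (hm0N.mul hπN)
  have hμR_eq := tendsto_nhds_unique hμR <| hbase.continuousWithinAt.tendsto.add <|
    (tendsto_ite_le_nhdsGT hm1C.continuousAt).mul hπC.continuousWithinAt.tendsto
  have hμL_eq := tendsto_nhds_unique hμL <| hbase.continuousWithinAt.tendsto.add <|
    (tendsto_ite_le_nhdsLT hm0C.continuousAt).mul hπC.continuousWithinAt.tendsto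
  have hpR_eq := tendsto_nhds_unique hpR <| hπA.continuousWithinAt.tendsto.add <|
    tendsto_ite_le_nhdsGT (g := fun _ => 0) hπC.continuousAt
  have hpL_eq := tendsto_nhds_unique hpL <| hπA.continuousWithinAt.tendsto.add <|
    tendsto_ite_le_nhdsLT (f := πC) continuousAt_const
  have hμjump : μR - μL = (m1C c - m0C c) * πC c := by rw [hμR_eq, hμL_eq]; ring
  have hpjump : pR - pL = πC c := by rw [hpR_eq, hpL_eq]; ring
  rw [hμjump, hpjump, mul_div_cancel_right₀ _ hjump]
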